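/- arXiv:1905.04438 — 7 statements merged into one kernel-verified Lean document; each statement's English description precedes it below -/
import Mathlib

section
/- Let X = X₁ + ⋯ + X_ℓ be a sum of independent Bernoulli random variables X_i ~ Bernoulli(p_i), and let Y be a nonnegative integer-valued random variable (independent of X) with E[Y] ≤ β·E[X] for some β ∈ (0,1]. Then Pr[X < Y] < β. -/
/-!
Write `S = ∑ i, X i` and `m = ∑ i, P(X i = 1) = E[S]`. Since `X i` is independent of `S - X i`,
`P(X i = 1) · P(S < k) ≤ P(X i = 1, S ≤ k)`; summing over `i` and using the pointwise bound
`S · 1{S ≤ k} + 1{S < k} ≤ k` gives `(m + 1) · P(S < k) ≤ k` for every `k : ℕ`. Averaging over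
the independent `Y` yields `(m + 1) · P(S < Y) ≤ E[Y] ≤ β m < β (m + 1)`.
-/

open MeasureTheory ProbabilityTheory
open scoped ENNReal

lemma natCast_eq_indicator_one_of_le_one {α : Type*} {Z : α → ℕ} (h : ∀ a, Z a ≤ 1) :
    (fun a => (Z a : ℝ≥0∞)) = {a | Z a = 1}.indicator 1 := by
  funext a
  rcases Nat.le_one_iff_eq_zero_or_eq_one.mp (h a) with h0 | h1 <;> simp [Set.indicator, *]

section NatValued

variable {Ω : Type*} [MeasurableSpace Ω] {μ : Measure Ω}

lemma lintegral_natCast_of_le_one {Z : Ω → ℕ} (hZ : Measurable Z) (h : ∀ ω, Z ω ≤ 1) :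
    ∫⁻ ω, (Z ω : ℝ≥0∞) ∂μ = μ {ω | Z ω = 1} := by
  rw [natCast_eq_indicator_one_of_le_one h]
  exact lintegral_indicator_one (hZ (measurableSet_singleton 1))

lemma lintegral_natCast_eq_tsum {Y : Ω → ℕ} (hY : Measurable Y) :
    ∫⁻ ω, (Y ω : ℝ≥0∞) ∂μ = ∑' k : ℕ, k * μ {ω | Y ω = k} := by
  rw [← lintegral_map (f := fun k : ℕ => (k : ℝ≥0∞)) (measurable_of_countable _) hY,
    lintegral_countable']
  exact tsum_congr fun k => congrArg _ (Measure.map_apply hY (measurableSet_singleton k))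

lemma integral_natCast_eq_toReal_lintegral {Z : Ω → ℕ} (hZ : Measurable Z) :
    ∫ ω, (Z ω : ℝ) ∂μ = (∫⁻ ω, (Z ω : ℝ≥0∞) ∂μ).toReal := by
  rw [integral_eq_lintegral_of_nonneg_ae (ae_of_all _ fun ω => Nat.cast_nonneg _)
    (by fun_prop)]
  simp

lemma ProbabilityTheory.IndepFun.measure_lt_eq_tsum [IsFiniteMeasure μ] {S Y : Ω → ℕ}
    (h : IndepFun S Y μ) (hS : Measurable S) (hY : Measurable Y) :
    μ {ω | S ω < Y ω} = ∑' k : ℕ, μ {ω | S ω < k} * μ {ω | Y ω = k} := by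
  have hlt : MeasurableSet {q : ℕ × ℕ | q.1 < q.2} := .of_discrete
  have hmap := congrArg (· {q : ℕ × ℕ | q.1 < q.2})
    ((indepFun_iff_map_prod_eq_prod_map_map hS.aemeasurable hY.aemeasurable).1 h)
  rw [Measure.map_apply (hS.prodMk hY) hlt, Measure.prod_apply_symm hlt,
    lintegral_countable'] at hmap
  refine hmap.trans (tsum_congr fun k => ?_)
  rw [Measure.map_apply hS .of_discrete, Measure.map_apply hY .of_discrete]
  rfl

end NatValued

section BernoulliSum

variable {Ω ι : Type*} [MeasurableSpace Ω] {μ : Measure Ω} [Fintype ι] {X : ι → Ω → ℕ}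

lemma measure_mul_measure_sum_lt_le_measure_inter (hX : ∀ i, Measurable (X i))
    (hindep : iIndepFun X μ) (i : ι) (k : ℕ) :
    μ {ω | X i ω = 1} * μ {ω | ∑ j, X j ω < k}
      ≤ μ ({ω | X i ω = 1} ∩ {ω | ∑ j, X j ω ≤ k}) := by
  classical
  set R : Ω → ℕ := fun ω => ∑ j ∈ Finset.univ.erase i, X j ω
  have hsplit : ∀ ω, ∑ j, X j ω = X i ω + R ω := fun ω =>
    (Finset.add_sum_erase _ _ (Finset.mem_univ i)).symm
  have hR : IndepFun (X i) R μ := by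
    have := (hindep.indepFun_finsetSum_of_notMem hX (Finset.notMem_erase i Finset.univ)).symm
    convert this using 1
    funext ω; simp [R]
  calc μ {ω | X i ω = 1} * μ {ω | ∑ j, X j ω < k}
      ≤ μ {ω | X i ω = 1} * μ {ω | R ω < k} := by
        gcongr with ω
        exact (hsplit ω).symm ▸ Nat.le_add_left _ _
    _ = μ ({ω | X i ω = 1} ∩ {ω | R ω < k}) :=
        (hR.measure_inter_preimage_eq_mul {1} (Set.Iio k) .of_discrete .of_discrete).symm
    _ ≤ μ ({ω | X i ω = 1} ∩ {ω | ∑ j, X j ω ≤ k}) := by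
        refine measure_mono fun ω ⟨h1, h2⟩ => ⟨h1, ?_⟩
        simp only [Set.mem_ofPred_eq, hsplit] at h1 h2 ⊢
        omega

lemma lintegral_sum_natCast_of_le_one (hX : ∀ i, Measurable (X i)) (h01 : ∀ i ω, X i ω ≤ 1) :
    ∫⁻ ω, ((∑ i, X i ω : ℕ) : ℝ≥0∞) ∂μ = ∑ i, μ {ω | X i ω = 1} := by
  push_cast
  rw [lintegral_finsetSum _ fun i _ => by fun_prop]
  exact Finset.sum_congr rfl fun i _ => lintegral_natCast_of_le_one (hX i) (h01 i)

lemma setLIntegral_sum_natCast_of_le_one (hX : ∀ i, Measurable (X i))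
    (h01 : ∀ i ω, X i ω ≤ 1) (A : Set Ω) :
    ∫⁻ ω in A, ((∑ i, X i ω : ℕ) : ℝ≥0∞) ∂μ = ∑ i, μ ({ω | X i ω = 1} ∩ A) := by
  rw [lintegral_sum_natCast_of_le_one hX h01]
  exact Finset.sum_congr rfl fun i _ => Measure.restrict_apply (hX i (measurableSet_singleton 1))

lemma sum_measure_add_one_mul_measure_sum_lt_le [IsProbabilityMeasure μ]
    (hX : ∀ i, Measurable (X i)) (hindep : iIndepFun X μ) (h01 : ∀ i ω, X i ω ≤ 1) (k : ℕ) :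
    (∑ i, μ {ω | X i ω = 1} + 1) * μ {ω | ∑ i, X i ω < k} ≤ k := by
  set S : Ω → ℕ := fun ω => ∑ i, X i ω
  have hS : Measurable S := by fun_prop
  have hle : MeasurableSet {ω | S ω ≤ k} := hS (.of_discrete (s := Set.Iic k))
  have hlt : MeasurableSet {ω | S ω < k} := hS (.of_discrete (s := Set.Iio k))
  have hpoint : ∀ ω, {ω | S ω ≤ k}.indicator (fun ω => (S ω : ℝ≥0∞)) ω
      + {ω | S ω < k}.indicator 1 ω ≤ k := by
    intro ω
    rcases lt_trichotomy (S ω) k with h | h | h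
    · simp only [Set.indicator, Set.mem_ofPred_eq, h, h.le, if_true, Pi.one_apply]
      exact_mod_cast h
    · simp [Set.indicator, h]
    · simp [Set.indicator, h.not_ge, h.not_gt]
  calc (∑ i, μ {ω | X i ω = 1} + 1) * μ {ω | S ω < k}
      = ∑ i, μ {ω | X i ω = 1} * μ {ω | S ω < k} + μ {ω | S ω < k} := by
        rw [add_mul, Finset.sum_mul, one_mul]
    _ ≤ ∑ i, μ ({ω | X i ω = 1} ∩ {ω | S ω ≤ k}) + μ {ω | S ω < k} := by
        gcongr with i
        exact measure_mul_measure_sum_lt_le_measure_inter hX hindep i k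
    _ = ∫⁻ ω, ({ω | S ω ≤ k}.indicator (fun ω => (S ω : ℝ≥0∞)) ω
          + {ω | S ω < k}.indicator 1 ω) ∂μ := by
        rw [← setLIntegral_sum_natCast_of_le_one hX h01, lintegral_add_left (by fun_prop),
          lintegral_indicator hle, lintegral_indicator_one hlt]
    _ ≤ ∫⁻ _, (k : ℝ≥0∞) ∂μ := lintegral_mono hpoint
    _ = k := by simp

lemma sum_measure_add_one_mul_measure_sum_lt_le_lintegral [IsProbabilityMeasure μ] {Y : Ω → ℕ}
    (hX : ∀ i, Measurable (X i)) (hY : Measurable Y) (hindep : iIndepFun X μ)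
    (hXY : IndepFun (fun ω => ∑ i, X i ω) Y μ) (h01 : ∀ i ω, X i ω ≤ 1) :
    (∑ i, μ {ω | X i ω = 1} + 1) * μ {ω | ∑ i, X i ω < Y ω} ≤ ∫⁻ ω, (Y ω : ℝ≥0∞) ∂μ := by
  rw [hXY.measure_lt_eq_tsum (by fun_prop) hY, lintegral_natCast_eq_tsum hY,
    ← ENNReal.tsum_mul_left]
  refine ENNReal.tsum_le_tsum fun k => ?_
  rw [← mul_assoc]
  gcongr
  exact sum_measure_add_one_mul_measure_sum_lt_le hX hindep h01 k

end BernoulliSum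

theorem probability_matching_general
    {Ω : Type*} [MeasurableSpace Ω] (μ : Measure Ω) [IsProbabilityMeasure μ]
    (ℓ : ℕ) (X : Fin ℓ → Ω → ℕ) (Y : Ω → ℕ) (β : ℝ)
    (hmX : ∀ i, Measurable (X i)) (hmY : Measurable Y)
    (hX01 : ∀ i ω, X i ω ≤ 1)
    (hindep : iIndepFun X μ)
    (hindepY : IndepFun (fun ω => fun i => X i ω) Y μ)
    (hβ0 : 0 < β)
    (hIntY : Integrable (fun ω => (Y ω : ℝ)) μ)
    (hEY : ∫ ω, (Y ω : ℝ) ∂μ ≤ β * ∫ ω, (∑ i, (X i ω : ℝ)) ∂μ) :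
    (μ {ω | ∑ i, X i ω < Y ω}).toReal < β := by
  set m := ∑ i, μ {ω | X i ω = 1}
  have hm : m ≠ ∞ := ENNReal.sum_ne_top.2 fun i _ => measure_ne_top μ _
  have hEX : ∫ ω, ∑ i, (X i ω : ℝ) ∂μ = m.toReal := by
    have h := integral_natCast_eq_toReal_lintegral (μ := μ) (Z := fun ω => ∑ i, X i ω)
      (by fun_prop)
    rw [lintegral_sum_natCast_of_le_one hmX hX01] at h
    exact_mod_cast h
  have hYfin : ∫⁻ ω, (Y ω : ℝ≥0∞) ∂μ ≠ ∞ := by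
    simpa using hIntY.lintegral_lt_top.ne
  have hXY : IndepFun (fun ω => ∑ i, X i ω) Y μ :=
    hindepY.comp (φ := fun x : Fin ℓ → ℕ => ∑ i, x i) (by fun_prop) measurable_id
  have key := ENNReal.toReal_mono hYfin
    (sum_measure_add_one_mul_measure_sum_lt_le_lintegral hmX hmY hindep hXY hX01)
  rw [ENNReal.toReal_mul, ENNReal.toReal_add hm ENNReal.one_ne_top,
    ENNReal.toReal_one] at key
  rw [hEX, integral_natCast_eq_toReal_lintegral hmY] at hEY
  nlinarith [ENNReal.toReal_nonneg (a := m)]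

/-- Probability Matching Lemma: if `X = ∑ i, X i` is a sum of independent
Bernoulli random variables, `Y` is a nonnegative-integer random variable
independent of the family `X`, with `E[Y] ≤ β · E[X]`, `E[X] > 0` and
`β ∈ (0,1]`, then `Pr[X < Y] < β`. -/
theorem probability_matching
    {Ω : Type*} [MeasurableSpace Ω] (μ : Measure Ω) [IsProbabilityMeasure μ]
    (ℓ : ℕ) (X : Fin ℓ → Ω → ℕ) (Y : Ω → ℕ) (p : Fin ℓ → ℝ) (β : ℝ)
    (hmX : ∀ i, Measurable (X i)) (hmY : Measurable Y)
    (hX01 : ∀ i ω, X i ω ≤ 1)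
    (hp : ∀ i, 0 ≤ p i ∧ p i ≤ 1)
    (hBern : ∀ i, μ {ω | X i ω = 1} = ENNReal.ofReal (p i))
    (hindep : iIndepFun X μ)
    (hindepY : IndepFun (fun ω => fun i => X i ω) Y μ)
    (hβ0 : 0 < β) (hβ1 : β ≤ 1)
    (hIntY : Integrable (fun ω => (Y ω : ℝ)) μ)
    (hEX : 0 < ∫ ω, (∑ i, (X i ω : ℝ)) ∂μ)
    (hEY : ∫ ω, (Y ω : ℝ) ∂μ ≤ β * ∫ ω, (∑ i, (X i ω : ℝ)) ∂μ) :
    (μ {ω | ∑ i, X i ω < Y ω}).toReal < β :=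
  probability_matching_general μ ℓ X Y β hmX hmY hX01 hindep hindepY hβ0 hIntY hEY
end

section
/- For any real μ > 0 and any integer η with 1 ≤ η < μ, exp(-(1/2)·(1 - (η-1)/μ)²·μ) < η/μ. -/
/-!
Put `y = (μ - η + 1)² / (2μ)`, so that the left-hand side is `exp (-y)`. Since
`exp y ≥ 1 + y + y² / 2`, it suffices that `μ < η (1 + y + y² / 2)`. Cleared of denominators and
written in `d = μ - η + 1` and `e = η - 1 ≥ 0`, this is a polynomial inequality which is trivial
for `d < 1` and, for `d ≥ 1`, holds coefficientwise as a quadratic in `e`.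
-/

lemma mul_sq_mul_sub_lt {μ η : ℝ} (hμ : 0 < μ) (hη : 1 ≤ η) :
    8 * μ ^ 2 * (μ - η) < η * (μ - η + 1) ^ 2 * (4 * μ + (μ - η + 1) ^ 2) := by
  obtain ⟨e, he, rfl⟩ : ∃ e, 0 ≤ e ∧ η = e + 1 := ⟨η - 1, by linarith, by ring⟩
  obtain ⟨d, rfl⟩ : ∃ d, μ = d + e := ⟨μ - e, by ring⟩
  rw [show d + e - (e + 1) = d - 1 by ring, sub_add_cancel]
  rcases lt_or_ge d 1 with hd1 | hd1
  · have : 0 ≤ (e + 1) * d ^ 2 * (4 * (d + e) + d ^ 2) := by positivity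
    nlinarith [mul_pos (mul_pos hμ hμ) (sub_pos.2 hd1)]
  · have hd0 : 0 < d := by linarith
    have c2 : 0 < d ^ 2 - 2 * d + 2 := by nlinarith [sq_nonneg (d - 1)]
    have c1 : 0 < d ^ 3 + 4 * d ^ 2 - 12 * d + 16 := by
      nlinarith [sq_nonneg (d - 1), sq_nonneg (d - 2)]
    have c0 : 0 < d ^ 2 - 4 * d + 8 := by nlinarith [sq_nonneg (d - 2)]
    nlinarith [mul_nonneg (mul_nonneg he he) c2.le, mul_nonneg (mul_nonneg he hd0.le) c1.le,
      mul_pos (mul_pos hd0 hd0) c0]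

lemma lt_mul_one_add_add_sq_div_two {μ η : ℝ} (hμ : 0 < μ) (hη : 1 ≤ η) :
    let y := (μ - η + 1) ^ 2 / (2 * μ)
    μ < η * (1 + y + y ^ 2 / 2) := by
  have hy : η * (1 + (μ - η + 1) ^ 2 / (2 * μ) + ((μ - η + 1) ^ 2 / (2 * μ)) ^ 2 / 2) - μ
      = (η * (μ - η + 1) ^ 2 * (4 * μ + (μ - η + 1) ^ 2) - 8 * μ ^ 2 * (μ - η)) / (8 * μ ^ 2) := by
    field_simp; ring
  have := div_pos (sub_pos.2 (mul_sq_mul_sub_lt hμ hη)) (by positivity : (0 : ℝ) < 8 * μ ^ 2)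
  intro y
  linarith

theorem Real.exp_neg_half_mul_sq_lt_div {μ η : ℝ} (hμ : 0 < μ) (hη : 1 ≤ η) :
    Real.exp (-(1/2) * (1 - (η - 1)/μ)^2 * μ) < η/μ := by
  set y := (μ - η + 1) ^ 2 / (2 * μ) with hy
  have hexp : -(1/2) * (1 - (η - 1)/μ)^2 * μ = -y := by rw [hy]; field_simp; ring
  have hη0 : 0 < η := by linarith
  calc Real.exp (-(1/2) * (1 - (η - 1)/μ)^2 * μ) = (Real.exp y)⁻¹ := by rw [hexp, Real.exp_neg]
    _ < (μ / η)⁻¹ := by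
      gcongr
      calc μ / η < 1 + y + y ^ 2 / 2 := by
            rw [div_lt_iff₀' hη0]; exact lt_mul_one_add_add_sq_div_two hμ hη
        _ ≤ Real.exp y := Real.quadratic_le_exp_of_nonneg (by positivity)
    _ = η / μ := inv_div μ η

theorem chernoff_threshold_ineq_general (μ : ℝ) (hμ : 0 < μ) (η : ℕ) (hη1 : 1 ≤ η) :
    Real.exp (-(1/2) * (1 - ((η : ℝ) - 1)/μ)^2 * μ) < (η : ℝ)/μ :=
  Real.exp_neg_half_mul_sq_lt_div hμ (by exact_mod_cast hη1)

/-- For any real `μ > 0` and any integer `η` with `1 ≤ η < μ`,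
`exp(-(1/2)·(1-(η-1)/μ)²·μ) < η/μ`. -/
theorem chernoff_threshold_ineq (μ : ℝ) (hμ : 0 < μ) (η : ℕ) (hη1 : 1 ≤ η)
    (hημ : (η : ℝ) < μ) :
    Real.exp (-(1/2) * (1 - ((η : ℝ) - 1)/μ)^2 * μ) < (η : ℝ)/μ :=
  chernoff_threshold_ineq_general μ hμ η hη1
end

section
/- Fix a ratio r ∈ (0,1) and let f(μ) = (1 - r + 1/μ)²·μ for μ > 0. Then f is decreasing on (0, 1/(1-r)] and increasing on [1/(1-r), ∞), and for all μ ≥ 1/r one has exp(-f(μ)/2) < r. -/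
/-!
Writing `a = 1 - r`, one has `f μ = a² μ + 2a + 1/μ`, so `f y - f x = (y - x)(a² x y - 1)/(x y)`,
whose sign changes exactly at `xy = 1/a²`. For `μ ≥ 1/r`, dropping `1/μ` gives
`f μ > a²/r + 2a = 1/r - r`, and `1/r - r = 2 sinh (-log r) > -2 log r`.
-/

open Real Set

section AddOneDivSqMul

variable {a c x y μ : ℝ}

lemma add_one_div_sq_mul_sub_add_one_div_sq_mul (hx : x ≠ 0) (hy : y ≠ 0) :
    (a + 1/y)^2 * y - (a + 1/x)^2 * x = (y - x) * (a^2 * x * y - 1) / (x * y) := by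
  field_simp
  ring

theorem antitoneOn_add_one_div_sq_mul (ha : 0 < a) :
    AntitoneOn (fun μ : ℝ => (a + 1/μ)^2 * μ) (Ioc 0 (1/a)) := by
  rintro x ⟨hx, hxa⟩ y ⟨hy, hya⟩ hxy
  have hax : a * x ≤ 1 := (le_div_iff₀' ha).1 hxa
  have hay : a * y ≤ 1 := (le_div_iff₀' ha).1 hya
  have hxy1 : a^2 * x * y ≤ 1 := by
    calc a^2 * x * y = (a * x) * (a * y) := by ring
      _ ≤ 1 := mul_le_one₀ hax (by positivity) hay
  rw [← sub_nonpos, add_one_div_sq_mul_sub_add_one_div_sq_mul hx.ne' hy.ne']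
  exact div_nonpos_of_nonpos_of_nonneg
    (mul_nonpos_of_nonneg_of_nonpos (sub_nonneg.2 hxy) (sub_nonpos.2 hxy1)) (by positivity)

theorem monotoneOn_add_one_div_sq_mul (ha : 0 < a) :
    MonotoneOn (fun μ : ℝ => (a + 1/μ)^2 * μ) (Ici (1/a)) := by
  intro x hxa y hya hxy
  have hax : 1 ≤ a * x := (div_le_iff₀' ha).1 hxa
  have hay : 1 ≤ a * y := (div_le_iff₀' ha).1 hya
  have hx : 0 < x := pos_of_mul_pos_right (one_pos.trans_le hax) ha.le
  have hy : 0 < y := hx.trans_le hxy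
  have hxy1 : 1 ≤ a^2 * x * y := by
    calc 1 ≤ (a * x) * (a * y) := one_le_mul_of_one_le_of_one_le hax hay
      _ = a^2 * x * y := by ring
  rw [← sub_nonneg, add_one_div_sq_mul_sub_add_one_div_sq_mul hx.ne' hy.ne']
  exact div_nonneg (mul_nonneg (sub_nonneg.2 hxy) (sub_nonneg.2 hxy1)) (by positivity)

lemma sq_mul_add_two_mul_lt_add_one_div_sq_mul (hμ : 0 < μ) (hcμ : c ≤ μ) :
    a^2 * c + 2 * a < (a + 1/μ)^2 * μ := by
  have hexpand : (a + 1/μ)^2 * μ = a^2 * μ + 2 * a + 1/μ := by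
    field_simp
    ring
  have hcμ' : a^2 * c ≤ a^2 * μ := mul_le_mul_of_nonneg_left hcμ (sq_nonneg a)
  have hinv : 0 < 1/μ := one_div_pos.2 hμ
  linarith

end AddOneDivSqMul

lemma neg_two_mul_log_lt_inv_sub {r : ℝ} (hr0 : 0 < r) (hr1 : r < 1) :
    -2 * log r < r⁻¹ - r := by
  have hsinh : 2 * sinh (-log r) = r⁻¹ - r := by
    rw [sinh_eq, neg_neg, exp_neg, exp_log hr0]
    ring
  have hlog : 0 < -log r := neg_pos.2 (log_neg hr0 hr1)
  linarith [self_lt_sinh_iff.2 hlog]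

/-- For `r ∈ (0,1)` and `f(μ) = (1-r+1/μ)²·μ`: `f` is decreasing on
`(0, 1/(1-r)]`, increasing on `[1/(1-r), ∞)`, and for all `μ ≥ 1/r` we have
`exp(-f(μ)/2) < r`. -/
theorem monotonicity_and_bound (r : ℝ) (hr0 : 0 < r) (hr1 : r < 1)
    (f : ℝ → ℝ) (hf : ∀ μ, f μ = (1 - r + 1/μ)^2 * μ) :
    AntitoneOn f (Set.Ioc 0 (1/(1-r))) ∧
    MonotoneOn f (Set.Ici (1/(1-r))) ∧
    ∀ μ : ℝ, 1/r ≤ μ → Real.exp (-(f μ)/2) < r := by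
  obtain rfl : f = fun μ => (1 - r + 1/μ)^2 * μ := funext hf
  have ha : 0 < 1 - r := sub_pos.2 hr1
  refine ⟨antitoneOn_add_one_div_sq_mul ha, monotoneOn_add_one_div_sq_mul ha, fun μ hμ => ?_⟩
  have hμ0 : 0 < μ := (one_div_pos.2 hr0).trans_le hμ
  have hlower : (1 - r)^2 * (1/r) + 2 * (1 - r) = r⁻¹ - r := by
    field_simp
    ring
  have hf_gt : -2 * log r < (1 - r + 1/μ)^2 * μ := by
    linarith [neg_two_mul_log_lt_inv_sub hr0 hr1,
      sq_mul_add_two_mul_lt_add_one_div_sq_mul (a := 1 - r) hμ0 hμ]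
  calc exp (-((1 - r + 1/μ)^2 * μ)/2) < exp (log r) := exp_lt_exp.2 (by linarith)
    _ = r := exp_log hr0
end

section
/- If X = X₁ + ⋯ + X_ℓ is a sum of negatively correlated {0,1}-valued random variables with mean μ = E[X] > 0 satisfying the Chernoff lower-tail bound Pr[X ≤ (1-δ)μ] ≤ exp(-δ²μ/2) for all δ ∈ [0,1], then for every integer η ≥ 1, Pr[X < η] < η/μ. -/
/-!
If `η > μ` the claim is trivial. Otherwise take
`δ = (μ + 1 - η) / μ ∈ (0, 1]`, so that `(1 - δ) μ = η - 1` and `{X < η} ⊆ {X ≤ (1 - δ) μ}`.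
With `t = δ μ` it remains to show `exp (-t² / (2μ)) < (μ + 1 - t) / μ` for `1 ≤ t ≤ μ`, which
follows from `exp y ≥ 1 + y + y² / 2` and a polynomial inequality.
-/

open MeasureTheory

lemma cube_lt_mul_quartic {μ t : ℝ} (ht : 1 ≤ t) (htμ : t ≤ μ) :
    8 * μ ^ 3 < (μ + 1 - t) * (8 * μ ^ 2 + 4 * μ * t ^ 2 + t ^ 4) := by
  nlinarith [mul_nonneg (mul_nonneg (sub_nonneg.2 htμ) (sq_nonneg (t - 2))) (sq_nonneg t),
    mul_nonneg (sub_nonneg.2 htμ) (sub_nonneg.2 ht), pow_pos (one_pos.trans_le ht) 4]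

lemma lt_mul_exp_sq_div {μ t : ℝ} (hμ : 0 < μ) (ht : 1 ≤ t) (htμ : t ≤ μ) :
    μ < (μ + 1 - t) * Real.exp (t ^ 2 / (2 * μ)) := by
  set y := t ^ 2 / (2 * μ) with hy
  have hquad : 1 + y + y ^ 2 / 2 ≤ Real.exp y := Real.quadratic_le_exp_of_nonneg (by positivity)
  have hpoly : μ < (μ + 1 - t) * (1 + y + y ^ 2 / 2) := by
    rw [show 1 + y + y ^ 2 / 2 = (8 * μ ^ 2 + 4 * μ * t ^ 2 + t ^ 4) / (8 * μ ^ 2) by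
        rw [hy]; field_simp; ring,
      mul_div_assoc', lt_div_iff₀ (by positivity)]
    nlinarith [cube_lt_mul_quartic ht htμ]
  calc μ < (μ + 1 - t) * (1 + y + y ^ 2 / 2) := hpoly
    _ ≤ (μ + 1 - t) * Real.exp y := by gcongr; linarith

lemma exp_neg_sq_mul_div_two_lt {μ η : ℝ} (hμ : 0 < μ) (hη : 1 ≤ η) (hημ : η ≤ μ) :
    Real.exp (-((μ + 1 - η) / μ) ^ 2 * μ / 2) < η / μ := by
  have key := lt_mul_exp_sq_div hμ (t := μ + 1 - η) (by linarith) (by linarith)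
  rw [sub_sub_cancel] at key
  have hexponent : -((μ + 1 - η) / μ) ^ 2 * μ / 2 = -((μ + 1 - η) ^ 2 / (2 * μ)) := by
    field_simp
  rw [hexponent, Real.exp_neg, lt_div_iff₀ hμ, inv_mul_lt_iff₀ (Real.exp_pos _)]
  linarith

theorem lower_tail_bound_general
    {Ω : Type*} [MeasurableSpace Ω] (P : Measure Ω) [IsProbabilityMeasure P]
    (X : Ω → ℕ) (μ₀ : ℝ) (hμ₀ : 0 < μ₀)
    (hChernoff : ∀ δ : ℝ, 0 ≤ δ → δ ≤ 1 →
      (P {ω | (X ω : ℝ) ≤ (1 - δ) * μ₀}).toReal ≤ Real.exp (-δ^2 * μ₀ / 2)) :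
    ∀ η : ℕ, 1 ≤ η → (P {ω | X ω < η}).toReal < (η : ℝ) / μ₀ := by
  intro η hη
  have hη' : (1 : ℝ) ≤ η := by exact_mod_cast hη
  rcases lt_or_ge μ₀ η with hlarge | hsmall
  · calc (P {ω | X ω < η}).toReal ≤ 1 := measureReal_le_one
      _ < η / μ₀ := (one_lt_div hμ₀).2 hlarge
  set δ := (μ₀ + 1 - η) / μ₀
  have hsub : {ω | X ω < η} ⊆ {ω | (X ω : ℝ) ≤ (1 - δ) * μ₀} := by
    intro ω (hω : X ω < η)
    have : (X ω : ℝ) + 1 ≤ η := by exact_mod_cast hω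
    show (X ω : ℝ) ≤ (1 - δ) * μ₀
    rw [sub_mul, div_mul_cancel₀ _ hμ₀.ne']
    linarith
  calc (P {ω | X ω < η}).toReal ≤ (P {ω | (X ω : ℝ) ≤ (1 - δ) * μ₀}).toReal :=
        measureReal_mono hsub
    _ ≤ Real.exp (-δ ^ 2 * μ₀ / 2) :=
        hChernoff δ (div_nonneg (by linarith) hμ₀.le) ((div_le_one hμ₀).2 (by linarith))
    _ < η / μ₀ := exp_neg_sq_mul_div_two_lt hμ₀ hη' hsmall

/-- If `X` is a nonnegative integer random variable with mean `μ₀ > 0`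
satisfying the Chernoff lower-tail bound
`Pr[X ≤ (1-δ)μ₀] ≤ exp(-δ²μ₀/2)` for all `δ ∈ [0,1]`, then for every
integer `η ≥ 1` we have `Pr[X < η] < η/μ₀`. -/
theorem lower_tail_bound
    {Ω : Type*} [MeasurableSpace Ω] (P : Measure Ω) [IsProbabilityMeasure P]
    (X : Ω → ℕ) (hmX : Measurable X) (μ₀ : ℝ) (hμ₀ : 0 < μ₀)
    (hmean : ∫ ω, (X ω : ℝ) ∂P = μ₀)
    (hChernoff : ∀ δ : ℝ, 0 ≤ δ → δ ≤ 1 →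
      (P {ω | (X ω : ℝ) ≤ (1 - δ) * μ₀}).toReal ≤ Real.exp (-δ^2 * μ₀ / 2)) :
    ∀ η : ℕ, 1 ≤ η → (P {ω | X ω < η}).toReal < (η : ℝ) / μ₀ :=
  lower_tail_bound_general P X μ₀ hμ₀ hChernoff
end

section
/- In the Ranking preference model, a committee S of size K is stable (no committee S' of size at most K with V(S,S') ≥ (|S'|/K)·n blocks it) if and only if it is 1-stable (no single candidate j with V(S,{j}) ≥ n/K blocks it). -/
/-- In the Ranking model, voter with ranking `rank` (lower is better, injective)
prefers committee `S₂` to `S₁` iff some candidate of `S₂` is ranked strictly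
above every candidate of `S₁` (the empty committee is least preferred). -/
def RankPrefers {C : Type*} (rank : C → ℕ) (S₁ S₂ : Finset C) : Prop :=
  ∃ c ∈ S₂, ∀ c' ∈ S₁, rank c < rank c'

/-- `V(S,S')`: the number of voters who strictly prefer `S'` to `S`. -/
noncomputable def Vrank {C : Type*} (n : ℕ) (rank : Fin n → C → ℕ) (S S' : Finset C) : ℕ :=
  Nat.card {v : Fin n // RankPrefers (rank v) S S'}

/-! A voter prefers `S'` to `S` exactly when she prefers some single member of `S'` to `S`, so
`V(S, S') ≤ ∑_{j ∈ S'} V(S, {j})`. If every singleton gets fewer than `n / K` votes, a nonempty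
`S'` therefore gets fewer than `|S'| · n / K`; conversely a blocking singleton is a blocking
committee of size `1 ≤ K`. -/

lemma rankPrefers_iff_exists_singleton {C : Type*} (r : C → ℕ) (S S' : Finset C) :
    RankPrefers r S S' ↔ ∃ j ∈ S', RankPrefers r S {j} := by
  simp [RankPrefers]

lemma vrank_le_sum_singleton {C : Type*} (n : ℕ) (rank : Fin n → C → ℕ) (S S' : Finset C) :
    Vrank n rank S S' ≤ ∑ j ∈ S', Vrank n rank S {j} := by
  classical
  have card_eq (T : Finset C) :
      Vrank n rank S T = (Finset.univ.filter fun v => RankPrefers (rank v) S T).card := by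
    rw [Vrank, Nat.card_eq_fintype_card, Fintype.card_subtype]
  simp only [card_eq]
  calc (Finset.univ.filter fun v => RankPrefers (rank v) S S').card
      = (S'.biUnion fun j => Finset.univ.filter fun v => RankPrefers (rank v) S {j}).card := by
        congr 1
        ext v
        simp [rankPrefers_iff_exists_singleton (rank v) S S']
    _ ≤ _ := Finset.card_biUnion_le

lemma vrank_lt_of_forall_vrank_singleton_lt {C : Type*} (n K : ℕ) (rank : Fin n → C → ℕ)
    (S S' : Finset C) (hS' : S'.Nonempty) (h : ∀ j, (Vrank n rank S {j} : ℝ) < n / K) :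
    (Vrank n rank S S' : ℝ) < S'.card / K * n :=
  calc (Vrank n rank S S' : ℝ)
      ≤ ∑ j ∈ S', (Vrank n rank S {j} : ℝ) := by exact_mod_cast vrank_le_sum_singleton n rank S S'
    _ < ∑ _j ∈ S', (n / K : ℝ) := Finset.sum_lt_sum_of_nonempty hS' fun j _ => h j
    _ = S'.card / K * n := by rw [Finset.sum_const, nsmul_eq_mul]; ring

theorem ranking_stable_iff_one_stable_general {C : Type*}
    (n K : ℕ) (hK : 0 < K) (rank : Fin n → C → ℕ)
    (S : Finset C) :
    (¬ ∃ S' : Finset C, S'.Nonempty ∧ S'.card ≤ K ∧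
        ((S'.card : ℝ) / K) * n ≤ (Vrank n rank S S' : ℝ)) ↔
    (¬ ∃ j : C, (n : ℝ) / K ≤ (Vrank n rank S {j} : ℝ)) := by
  constructor
  · rintro h ⟨j, hj⟩
    refine h ⟨{j}, Finset.singleton_nonempty j, by rwa [Finset.card_singleton], ?_⟩
    rwa [Finset.card_singleton, Nat.cast_one, div_mul_eq_mul_div, one_mul]
  · rintro h ⟨S', hS', -, hV⟩
    push Not at h
    exact (vrank_lt_of_forall_vrank_singleton_lt n K rank S S' hS' h).not_ge hV

/-- In the Ranking setting, a committee of size `K` is stable iff it is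
`1`-stable. -/
theorem ranking_stable_iff_one_stable {C : Type*} [Fintype C]
    (n K : ℕ) (hK : 0 < K) (rank : Fin n → C → ℕ)
    (hinj : ∀ v, Function.Injective (rank v))
    (S : Finset C) (hS : S.card = K) :
    (¬ ∃ S' : Finset C, S'.Nonempty ∧ S'.card ≤ K ∧
        ((S'.card : ℝ) / K) * n ≤ (Vrank n rank S S' : ℝ)) ↔
    (¬ ∃ j : C, (n : ℝ) / K ≤ (Vrank n rank S {j} : ℝ)) :=
  ranking_stable_iff_one_stable_general n K hK rank S
end

section
/- In the Approval Set setting with committee size K = 3, if a committee T of size at most 3 admits no blocking committee of size 1 or 2, then any Pareto-optimal committee T' of size at most 3 that weakly Pareto-dominates T is stable. -/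
/-!
A blocking committee `S'` of size at most two for `T'` also blocks `T`, because every voter who
prefers `S'` to `T'` prefers it to the weakly dominated `T`. A blocking committee of size three
needs the support of all `n` voters, so it would make every voter strictly better off than `T'`,
against Pareto-optimality.
-/

/-- `V(S,S')` in the Approval Set model: the number of voters `v` with
`|S' ∩ A_v| > |S ∩ A_v|`. -/
noncomputable def Vappr {C : Type*} [DecidableEq C] (n : ℕ) (A : Fin n → Finset C)
    (S S' : Finset C) : ℕ :=
  Nat.card {v : Fin n // (S ∩ A v).card < (S' ∩ A v).card}

open Finset

section Vappr

variable {C : Type*} [DecidableEq C] {n : ℕ} {A : Fin n → Finset C}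

theorem Vappr_eq_card_filter (S S' : Finset C) :
    Vappr n A S S' = #{v | (S ∩ A v).card < (S' ∩ A v).card} := by
  rw [Vappr, Nat.card_eq_fintype_card, Fintype.card_subtype]

theorem Vappr_le_Vappr_of_card_inter_le {S T : Finset C} (S' : Finset C)
    (h : ∀ v, (S ∩ A v).card ≤ (T ∩ A v).card) : Vappr n A T S' ≤ Vappr n A S S' := by
  rw [Vappr_eq_card_filter, Vappr_eq_card_filter]
  exact card_le_card <| monotone_filter_right _ fun v _ hv => (h v).trans_lt hv

theorem Vappr_le (S S' : Finset C) : Vappr n A S S' ≤ n := by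
  simpa using (Vappr_eq_card_filter (A := A) S S').trans_le (card_filter_le _ _)

theorem Vappr_eq_iff {S S' : Finset C} :
    Vappr n A S S' = n ↔ ∀ v, (S ∩ A v).card < (S' ∩ A v).card := by
  simpa [Vappr_eq_card_filter] using
    card_filter_eq_iff (s := univ) (p := fun v => (S ∩ A v).card < (S' ∩ A v).card)

end Vappr

theorem pareto_dominating_is_stable_general {C : Type*} [DecidableEq C]
    (n : ℕ) (A : Fin n → Finset C) (T T' : Finset C)
    (hTnoblock : ¬ ∃ S' : Finset C, S'.Nonempty ∧ S'.card ≤ 2 ∧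
      ((S'.card : ℝ) / 3) * n ≤ (Vappr n A T S' : ℝ))
    (hdom : ∀ v, (T ∩ A v).card ≤ (T' ∩ A v).card)
    (hpareto : ¬ ∃ S'' : Finset C, S''.card ≤ 3 ∧
      ∀ v, (T' ∩ A v).card < (S'' ∩ A v).card) :
    ¬ ∃ S' : Finset C, S'.Nonempty ∧ S'.card ≤ 3 ∧
      ((S'.card : ℝ) / 3) * n ≤ (Vappr n A T' S' : ℝ) := by
  rintro ⟨S', hne, hcard, hblock⟩
  rcases hcard.lt_or_eq with hlt | hthree
  · have hmono : (Vappr n A T' S' : ℝ) ≤ Vappr n A T S' := by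
      exact_mod_cast Vappr_le_Vappr_of_card_inter_le S' hdom
    exact hTnoblock ⟨S', hne, by omega, hblock.trans hmono⟩
  · have hall : Vappr n A T' S' = n := by
      refine le_antisymm (Vappr_le T' S') ?_
      rw [hthree] at hblock
      exact_mod_cast (by simpa using hblock : (n : ℝ) ≤ Vappr n A T' S')
    exact hpareto ⟨S', hthree.le, Vappr_eq_iff.mp hall⟩

/-- Approval Set setting, `K = 3`: if `T` (of size ≤ 3) admits no blocking
committee of size 1 or 2, and `T'` (of size ≤ 3) weakly Pareto-dominates `T`
and is Pareto-optimal among committees of size ≤ 3 (no committee of size ≤ 3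
makes every voter strictly better off), then `T'` is stable. -/
theorem pareto_dominating_is_stable {C : Type*} [Fintype C] [DecidableEq C]
    (n : ℕ) (A : Fin n → Finset C) (T T' : Finset C)
    (hT : T.card ≤ 3) (hT' : T'.card ≤ 3)
    (hTnoblock : ¬ ∃ S' : Finset C, S'.Nonempty ∧ S'.card ≤ 2 ∧
      ((S'.card : ℝ) / 3) * n ≤ (Vappr n A T S' : ℝ))
    (hdom : ∀ v, (T ∩ A v).card ≤ (T' ∩ A v).card)
    (hpareto : ¬ ∃ S'' : Finset C, S''.card ≤ 3 ∧
      ∀ v, (T' ∩ A v).card < (S'' ∩ A v).card) :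
    ¬ ∃ S' : Finset C, S'.Nonempty ∧ S'.card ≤ 3 ∧
      ((S'.card : ℝ) / 3) * n ≤ (Vappr n A T' S' : ℝ) :=
  pareto_dominating_is_stable_general n A T T' hTnoblock hdom hpareto
end

section
/- In the Approval Set setting with K = 3: suppose no pair of candidates is approved simultaneously by more than n/3 voters (n₂(S) ≤ n/3 for all size-2 S), and S = {a,b} satisfies n_{≥1}(S) ≥ 2n/3, and c is a candidate approved by at least one voter approving neither a nor b, with n_{≥1}({a,b,c}) > 2n/3. Then T = {a,b,c} has no blocking committee of size 1 or 2. -/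
/-- Number of voters approving exactly `i` members of `S`. -/
noncomputable def nExact {C : Type*} [DecidableEq C] (n : ℕ)
    (A : Fin n → Finset C) (S : Finset C) (i : ℕ) : ℕ :=
  Nat.card {v : Fin n // (S ∩ A v).card = i}

/-- Number of voters approving at least `i` members of `S`. -/
noncomputable def nAtLeast {C : Type*} [DecidableEq C] (n : ℕ)
    (A : Fin n → Finset C) (S : Finset C) (i : ℕ) : ℕ :=
  Nat.card {v : Fin n // i ≤ (S ∩ A v).card}

/-!
A voter prefers a committee `S'` to `T` only if she approves no member of `T`, or approves
at least two members of `S'`. Hence `V(T, S') ≤ n₀(T)` when `|S'| = 1` and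
`V(T, S') ≤ n₀(T) + n₂(S')` when `|S'| = 2`. Both bounds fall below `|S'| n / 3`, because
`n₀(T) = n - n_{≥1}(T) < n/3` and `n₂(S') ≤ n/3` by hypothesis.
-/

open Finset

section ApprovalCounts

variable {C : Type*} [DecidableEq C] (n : ℕ) (A : Fin n → Finset C)

theorem nExact_zero_add_nAtLeast_one (S : Finset C) :
    nExact n A S 0 + nAtLeast n A S 1 = n := by
  have e : {v // (S ∩ A v).card = 0} ≃ {v // ¬ 1 ≤ (S ∩ A v).card} :=
    Equiv.subtypeEquivRight fun v => by omega
  rw [nExact, nAtLeast, Nat.card_congr e, add_comm, ← Nat.card_sum,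
    Nat.card_congr (Equiv.sumCompl _), Nat.card_eq_fintype_card, Fintype.card_fin]

variable {n A}

theorem Vappr_le_nExact_zero {T S' : Finset C} (hS' : S'.card ≤ 1) :
    Vappr n A T S' ≤ nExact n A T 0 := by
  have hprefer : ∀ v, (T ∩ A v).card < (S' ∩ A v).card → (T ∩ A v).card = 0 := fun v h => by
    have := card_le_card (inter_subset_left (s₁ := S') (s₂ := A v))
    omega
  simp only [Vappr, nExact, Nat.card_eq_fintype_card]
  exact Fintype.card_subtype_mono _ _ hprefer

theorem Vappr_le_nExact_zero_add_nExact_two {T S' : Finset C} (hS' : S'.card ≤ 2) :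
    Vappr n A T S' ≤ nExact n A T 0 + nExact n A S' 2 := by
  have hprefer : ∀ v, (T ∩ A v).card < (S' ∩ A v).card →
      (T ∩ A v).card = 0 ∨ (S' ∩ A v).card = 2 := fun v h => by
    have := card_le_card (inter_subset_left (s₁ := S') (s₂ := A v))
    omega
  simp only [Vappr, nExact, Nat.card_eq_fintype_card]
  exact (Fintype.card_subtype_mono _ _ hprefer).trans (Fintype.card_subtype_or _ _)

end ApprovalCounts

theorem case_two_no_small_blockers_general {C : Type*} [DecidableEq C]
    (n : ℕ) (A : Fin n → Finset C) (a b c : C)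
    (hno2 : ∀ S : Finset C, S.card = 2 →
      (nExact n A S 2 : ℝ) ≤ (n : ℝ) / 3)
    (h2 : 2 * (n : ℝ) / 3 < (nAtLeast n A {a, b, c} 1 : ℝ)) :
    ∀ S' : Finset C, S'.Nonempty → S'.card ≤ 2 →
      (Vappr n A {a, b, c} S' : ℝ) < ((S'.card : ℝ) / 3) * n := by
  intro S' hne hcard
  have hn0 : (nExact n A {a, b, c} 0 : ℝ) < n / 3 := by
    have := congrArg (Nat.cast : ℕ → ℝ) (nExact_zero_add_nAtLeast_one n A {a, b, c})
    push_cast at this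
    linarith
  obtain hone | htwo : S'.card = 1 ∨ S'.card = 2 := by
    have := hne.card_pos
    omega
  · have hV : (Vappr n A {a, b, c} S' : ℝ) ≤ nExact n A {a, b, c} 0 := by
      exact_mod_cast Vappr_le_nExact_zero hone.le
    rw [hone]
    linarith
  · have hV : (Vappr n A {a, b, c} S' : ℝ) ≤ nExact n A {a, b, c} 0 + nExact n A S' 2 := by
      exact_mod_cast Vappr_le_nExact_zero_add_nExact_two htwo.le
    rw [htwo]
    linarith [hno2 S' htwo]

/-- Approval Set setting, `K = 3`, Case (2): suppose no size-2 committee is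
approved fully by more than `n/3` voters, `S = {a,b}` satisfies
`n_{≥1}(S) ≥ 2n/3`, and `c` is approved by some voter approving neither `a`
nor `b`, with `n_{≥1}({a,b,c}) > 2n/3`. Then `T = {a,b,c}` has no blocking
committee of size 1 or 2. -/
theorem case_two_no_small_blockers {C : Type*} [Fintype C] [DecidableEq C]
    (n : ℕ) (A : Fin n → Finset C) (a b c : C) (hab : a ≠ b)
    (hno2 : ∀ S : Finset C, S.card = 2 →
      (nExact n A S 2 : ℝ) ≤ (n : ℝ) / 3)
    (h1 : 2 * (n : ℝ) / 3 ≤ (nAtLeast n A {a, b} 1 : ℝ))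
    (hc : ∃ v : Fin n, c ∈ A v ∧ a ∉ A v ∧ b ∉ A v)
    (h2 : 2 * (n : ℝ) / 3 < (nAtLeast n A {a, b, c} 1 : ℝ)) :
    ∀ S' : Finset C, S'.Nonempty → S'.card ≤ 2 →
      (Vappr n A {a, b, c} S' : ℝ) < ((S'.card : ℝ) / 3) * n :=
  case_two_no_small_blockers_general n A a b c hno2 h2
end
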